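/- For any d, s ∈ ℕ and ε > 0 there exists r ∈ ℕ such that for any polynomial mapping φ ∈ Pol⁰_d([r], 𝕋) there exists a disjoint s-subcollection B in [r] such that the t-producing function Φ̃_B of the subpolynomial φ↓_B satisfies dist(Φ̃_B(u), 0) < ε for every u ∈ B^{(≤d)}. -/

import Mathlib

open Finset

/-- The `β`-derivative of a map `φ : F(A) → H`: `D_β φ (α) = φ(α ∪ β) - φ(α)`. -/
def fsDeriv {ι H : Type*} [DecidableEq ι] [AddCommGroup H]
    (φ : Finset ι → H) (β : Finset ι) : Finset ι → H :=
  fun α => φ (α ∪ β) - φ α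

/-- Iterated derivative `D_{β 0} ⋯ D_{β (n-1)} φ`. -/
def iterDeriv {ι H : Type*} [DecidableEq ι] [AddCommGroup H] :
    {n : ℕ} → (Finset ι → H) → (Fin n → Finset ι) → (Finset ι → H)
  | 0, φ, _ => φ
  | _ + 1, φ, β => iterDeriv (fsDeriv φ (β 0)) (fun i => β i.succ)

/-- `φ : F(A) → H` is polynomial of degree ≤ d: any d+1 pairwise disjoint
derivatives (by finite subsets of `A`) kill `φ` on `F(A)` away from them. -/
def IsPolyDeg {ι H : Type*} [DecidableEq ι] [AddCommGroup H]
    (A : Finset ι) (d : ℕ) (φ : Finset ι → H) : Prop :=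
  ∀ β : Fin (d + 1) → Finset ι, (∀ i, β i ⊆ A) →
    (∀ i j, i ≠ j → Disjoint (β i) (β j)) →
    ∀ α : Finset ι, α ⊆ A → (∀ i, Disjoint α (β i)) → iterDeriv φ β α = 0

/-- `Pol⁰_d(A,H)`: polynomial maps of degree ≤ d vanishing at `∅`. -/
def Pol0 {ι H : Type*} [DecidableEq ι] [AddCommGroup H]
    (A : Finset ι) (d : ℕ) (φ : Finset ι → H) : Prop :=
  IsPolyDeg A d φ ∧ φ (∅ : Finset ι) = 0

/-- `‖x‖`: the distance from a real number `x` to `ℤ`. -/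
noncomputable def distToInt (x : ℝ) : ℝ := |x - round x|

/-!
Induction on `d` gives disjoint nonempty `b₁, …, bₛ` such that `φ` is small on every union of
them. Colour the subsets of `[n]` by an `ε/2`-cell of the compact group containing the value of
`φ`; the multidimensional Hales–Jewett theorem yields `A` and disjoint nonempty `W₁, …, Wₖ` with
all `φ (A ∪ ⋃_{e ∈ v} Wₑ)` in the cell of `φ A`. Now
`φ (⋃_{e ∈ v} Wₑ) = (φ (A ∪ ⋃_{e ∈ v} Wₑ) - φ A) - ρ v` with `ρ v = D_A φ (⋃_{e ∈ v} Wₑ) - φ A`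
of degree `≤ d - 1`, and the induction hypothesis applied to `ρ` picks unions of the `Wₑ` on
which both terms are small.

The t-producing function is the Möbius inversion of `φ↓_B` over the subsets of `B`: it vanishes on
sets of more than `d` elements and is a signed sum of at most `2 ^ d` values of `φ↓_B`, so it is
`ε`-small once `φ↓_B` is `ε / 2 ^ d`-small.
-/

open Function

lemma disjoint_biUnion_of_pairwise {ι κ : Type*} [DecidableEq ι] {W : κ → Finset ι}
    (hW : Pairwise (Disjoint on W)) {v v' : Finset κ} (h : Disjoint v v') :
    Disjoint (v.biUnion W) (v'.biUnion W) := by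
  simp only [disjoint_biUnion_left, disjoint_biUnion_right]
  exact fun i hi j hj => hW (ne_of_mem_of_not_mem hj (disjoint_right.1 h hi))

section Derivatives

variable {ι κ H : Type*} [DecidableEq ι] [DecidableEq κ] [AddCommGroup H]

lemma fsDeriv_comp {B : Finset κ → Finset ι} (hB : ∀ s t, B (s ∪ t) = B s ∪ B t)
    (φ : Finset ι → H) (β : Finset κ) : fsDeriv (φ ∘ B) β = fsDeriv φ (B β) ∘ B := by
  funext α
  simp [fsDeriv, hB]

lemma iterDeriv_comp {B : Finset κ → Finset ι} (hB : ∀ s t, B (s ∪ t) = B s ∪ B t) :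
    ∀ {n : ℕ} (φ : Finset ι → H) (β : Fin n → Finset κ),
      iterDeriv (φ ∘ B) β = iterDeriv φ (B ∘ β) ∘ B
  | 0, _, _ => rfl
  | _ + 1, φ, β => by
    rw [iterDeriv, iterDeriv, fsDeriv_comp hB, iterDeriv_comp hB]
    rfl

variable {A : Finset ι} {d : ℕ} {φ : Finset ι → H}

lemma IsPolyDeg.comp_biUnion (hφ : IsPolyDeg A d φ) {W : κ → Finset ι} (hW : ∀ j, W j ⊆ A)
    (hWd : Pairwise (Disjoint on W)) (B : Finset κ) :
    IsPolyDeg B d (fun v => φ (v.biUnion W)) := by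
  intro β _ hβd α _ hαβ
  have hsub : ∀ v : Finset κ, v.biUnion W ⊆ A := fun v => biUnion_subset.2 fun j _ => hW j
  change iterDeriv (φ ∘ (·.biUnion W)) β α = 0
  rw [iterDeriv_comp fun _ _ => union_biUnion]
  exact hφ _ (fun i => hsub _) (fun i j hij => disjoint_biUnion_of_pairwise hWd (hβd i j hij))
    _ (hsub α) (fun i => disjoint_biUnion_of_pairwise hWd (hαβ i))

lemma Pol0.comp_biUnion (hφ : Pol0 A d φ) {W : κ → Finset ι} (hW : ∀ j, W j ⊆ A)
    (hWd : Pairwise (Disjoint on W)) (B : Finset κ) :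
    Pol0 B d (fun v => φ (v.biUnion W)) :=
  ⟨hφ.1.comp_biUnion hW hWd B, by simpa using hφ.2⟩

lemma IsPolyDeg.isPolyDeg_fsDeriv (hφ : IsPolyDeg A (d + 1) φ) {β : Finset ι} (hβ : β ⊆ A) :
    IsPolyDeg (A \ β) d (fsDeriv φ β) := by
  intro γ hγ hγd α hα hαγ
  have hβγ : ∀ i, Disjoint β (γ i) := fun i => disjoint_sdiff.mono_right (hγ i)
  refine hφ (Fin.cons β γ) (fun i => ?_) (fun i j hij => ?_) α (hα.trans sdiff_subset)
    (fun i => ?_)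
  · cases i using Fin.cases with
    | zero => exact hβ
    | succ i => exact (hγ i).trans sdiff_subset
  · cases i using Fin.cases <;> cases j using Fin.cases
    · exact absurd rfl hij
    · exact hβγ _
    · exact (hβγ _).symm
    · exact hγd _ _ fun h => hij (congrArg Fin.succ h)
  · cases i using Fin.cases with
    | zero => exact (disjoint_sdiff.mono_right hα).symm
    | succ i => exact hαγ i

lemma IsPolyDeg.sub_const (hφ : IsPolyDeg A d φ) (c : H) :
    IsPolyDeg A d (fun α => φ α - c) := by
  intro β hβ hβd α hα hαβ
  have h : fsDeriv (fun α => φ α - c) (β 0) = fsDeriv φ (β 0) :=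
    funext fun _ => sub_sub_sub_cancel_right _ _ _
  rw [iterDeriv, h]
  exact hφ β hβ hβd α hα hαβ

lemma IsPolyDeg.apply_eq_apply_empty (hφ : IsPolyDeg A 0 φ) {α : Finset ι} (hα : α ⊆ A) :
    φ α = φ ∅ := by
  have h := hφ (fun _ => α) (fun _ => hα)
    (fun i j hij => absurd (Subsingleton.elim (α := Fin 1) i j) hij) ∅ (empty_subset _)
    (fun _ => disjoint_empty_left _)
  simpa [iterDeriv, fsDeriv, sub_eq_zero] using h

end Derivatives

section TProducing

variable {κ H : Type*} [AddCommGroup H]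

def tProducing (ψ : Finset κ → H) (u : Finset κ) : H :=
  ∑ v ∈ u.powerset, (-1 : ℤ) ^ (#u + #v) • ψ v

lemma tProducing_empty (ψ : Finset κ → H) : tProducing ψ ∅ = ψ ∅ := by
  simp [tProducing]

lemma tProducing_insert [DecidableEq κ] (ψ : Finset κ → H) {a : κ} {u : Finset κ}
    (ha : a ∉ u) :
    tProducing ψ (insert a u) = tProducing (fsDeriv ψ {a}) u := by
  rw [tProducing, tProducing, sum_powerset_insert ha, ← sum_add_distrib]
  refine sum_congr rfl fun v hv => ?_
  have hav : a ∉ v := fun h => ha (mem_powerset.1 hv h)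
  rw [card_insert_of_notMem ha, card_insert_of_notMem hav, fsDeriv, union_singleton, smul_sub,
    show #u + 1 + (#v + 1) = #u + #v + 2 by omega, show #u + 1 + #v = #u + #v + 1 by omega,
    pow_succ, pow_succ, pow_succ]
  simp only [mul_neg, mul_one, neg_neg, neg_smul]
  abel

lemma sum_tProducing [DecidableEq κ] (ψ : Finset κ → H) (γ : Finset κ) :
    ∑ u ∈ γ.powerset, tProducing ψ u = ψ γ := by
  induction γ using Finset.induction_on generalizing ψ with
  | empty => simp [tProducing_empty]
  | insert a γ ha ih =>
    rw [sum_powerset_insert ha, ih, sum_congr rfl fun u hu =>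
      tProducing_insert ψ fun h => ha (mem_powerset.1 hu h), ih, fsDeriv, union_singleton]
    abel

lemma IsPolyDeg.tProducing_eq_zero [DecidableEq κ] {A : Finset κ} {d : ℕ} {ψ : Finset κ → H}
    (hψ : IsPolyDeg A d ψ) {u : Finset κ} (hu : u ⊆ A) (hd : d < #u) : tProducing ψ u = 0 := by
  induction d generalizing A ψ u with
  | zero =>
    rw [tProducing, sum_congr rfl fun v hv => by
      rw [hψ.apply_eq_apply_empty ((mem_powerset.1 hv).trans hu)], ← sum_smul]
    simp_rw [pow_add, ← mul_sum, sum_powerset_neg_one_pow_card_of_nonempty (card_pos.1 hd),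
      mul_zero, zero_smul]
  | succ d ih =>
    obtain ⟨a, ha⟩ := card_pos.1 (Nat.zero_lt_of_lt hd)
    rw [← insert_erase ha, tProducing_insert ψ (notMem_erase a u)]
    refine ih (hψ.isPolyDeg_fsDeriv (singleton_subset_iff.2 (hu ha))) ?_ ?_
    · rw [sdiff_singleton_eq_erase]
      exact erase_subset_erase a hu
    · rw [card_erase_of_mem ha]
      omega

lemma Pol0.eq_sum_tProducing [DecidableEq κ] {A : Finset κ} {d : ℕ} {ψ : Finset κ → H}
    (hψ : Pol0 A d ψ) {γ : Finset κ} (hγ : γ ⊆ A) :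
    ψ γ = ∑ u ∈ γ.powerset.filter (fun u => u ≠ ∅ ∧ #u ≤ d), tProducing ψ u := by
  rw [sum_filter_of_ne, sum_tProducing]
  intro u hu hne
  refine ⟨fun h => hne (by rw [h, tProducing_empty, hψ.2]), not_lt.1 fun hd => hne ?_⟩
  exact hψ.1.tProducing_eq_zero ((mem_powerset.1 hu).trans hγ) hd

lemma norm_tProducing_lt {H : Type*} [SeminormedAddCommGroup H] (ψ : Finset κ → H)
    {u : Finset κ} {δ : ℝ} (h : ∀ v ⊆ u, ‖ψ v‖ < δ) : ‖tProducing ψ u‖ < 2 ^ #u * δ := by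
  calc ‖tProducing ψ u‖ ≤ ∑ v ∈ u.powerset, ‖(-1 : ℤ) ^ (#u + #v) • ψ v‖ := norm_sum_le _ _
    _ < ∑ v ∈ u.powerset, δ := by
      refine sum_lt_sum_of_nonempty ⟨∅, empty_mem_powerset u⟩ fun v hv => ?_
      calc ‖(-1 : ℤ) ^ (#u + #v) • ψ v‖ ≤ ‖(-1 : ℤ) ^ (#u + #v)‖ * ‖ψ v‖ := norm_zsmul_le _ _
        _ = ‖ψ v‖ := by simp
        _ < δ := h v (mem_powerset.1 hv)
    _ = 2 ^ #u * δ := by simp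

end TProducing

lemma exists_coloring_dist_lt (X : Type*) [PseudoMetricSpace X] [CompactSpace X] {δ : ℝ}
    (hδ : 0 < δ) : ∃ (n : ℕ) (c : X → Fin n), ∀ x y, c x = c y → dist x y < δ := by
  obtain ⟨t, -, ht, hcover⟩ := finite_cover_balls_of_compact (isCompact_univ (X := X)) (half_pos hδ)
  have hcenter : ∀ x : X, ∃ y : t, dist x y < δ / 2 := fun x => by
    obtain ⟨y, hy, hxy⟩ := Set.mem_iUnion₂.1 (hcover (Set.mem_univ x))
    exact ⟨⟨y, hy⟩, hxy⟩
  choose f hf using hcenter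
  have := ht.to_subtype
  refine ⟨Nat.card t, Finite.equivFin t ∘ f, fun x y hxy => ?_⟩
  have hfxy : f x = f y := (Finite.equivFin t).injective hxy
  calc dist x y ≤ dist x (f x) + dist y (f y) := by rw [hfxy]; exact dist_triangle_right _ _ _
    _ < δ / 2 + δ / 2 := add_lt_add (hf x) (hf y)
    _ = δ := add_halves δ

open Combinatorics in
theorem exists_mono_union (η κ : Type*) [Finite η] [Finite κ] :
    ∃ n, ∀ C : Finset (Fin n) → κ, ∃ (A : Finset (Fin n)) (W : η → Finset (Fin n)),
      (∀ e, (W e).Nonempty) ∧ Pairwise (Disjoint on W) ∧ (∀ e, Disjoint A (W e)) ∧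
      ∀ v : Finset η, C (A ∪ v.biUnion W) = C A := by
  classical
  obtain ⟨n, hn⟩ := Subspace.exists_mono_in_high_dimension_fin Bool κ η
  refine ⟨n, fun C => ?_⟩
  obtain ⟨l, c, hl⟩ := hn fun y => C (univ.filter (y · = true))
  set A := univ.filter (l.idxFun · = .inl true)
  set W : η → Finset (Fin n) := fun e => univ.filter (l.idxFun · = .inr e)
  have hunion : ∀ v : Finset η,
      univ.filter (l (fun e => decide (e ∈ v)) · = true) = A ∪ v.biUnion W := by
    intro v
    ext i
    rcases h : l.idxFun i with a | e
    · cases a <;> simp [Subspace.apply_inl h, A, W, h]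
    · simp [Subspace.apply_inr h, A, W, h]
  refine ⟨A, W, fun e => ?_, fun e e' hee' => ?_, fun e => ?_, fun v => ?_⟩
  · obtain ⟨i, hi⟩ := l.proper e
    exact ⟨i, by simp [W, hi]⟩
  · simp only [Function.onFun, W, disjoint_left, mem_filter, mem_univ, true_and]
    intro i hi hi'
    exact hee' (Sum.inr_injective (hi.symm.trans hi'))
  · simp only [W, A, disjoint_left, mem_filter, mem_univ, true_and]
    intro i hi hi'
    exact Sum.inl_ne_inr (hi.symm.trans hi')
  · have hv : C (univ.filter (l (fun e => decide (e ∈ v)) · = true)) = c := hl _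
    have hempty : C (univ.filter (l (fun e => decide (e ∈ (∅ : Finset η))) · = true)) = c := hl _
    rw [hunion] at hv hempty
    simpa using hv.trans hempty.symm

theorem exists_forall_norm_biUnion_lt (H : Type*) [SeminormedAddCommGroup H] [CompactSpace H]
    (d s : ℕ) {ε : ℝ} (hε : 0 < ε) :
    ∃ r, ∀ φ : Finset (Fin r) → H, Pol0 univ d φ →
      ∃ b : Fin s → Finset (Fin r), (∀ j, (b j).Nonempty) ∧ Pairwise (Disjoint on b) ∧
        ∀ t : Finset (Fin s), ‖φ (t.biUnion b)‖ < ε := by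
  induction d generalizing ε with
  | zero =>
    refine ⟨s, fun φ hφ => ⟨fun j => {j}, fun _ => singleton_nonempty _,
      fun i j h => disjoint_singleton.2 h, fun t => ?_⟩⟩
    rwa [hφ.1.apply_eq_apply_empty (subset_univ _), hφ.2, norm_zero]
  | succ d ih =>
    obtain ⟨Q, col, hcol⟩ := exists_coloring_dist_lt H (half_pos hε)
    obtain ⟨k, hk⟩ := ih (half_pos hε)
    obtain ⟨n, hn⟩ := exists_mono_union (Fin k) (Fin Q)
    refine ⟨n, fun φ hφ => ?_⟩
    obtain ⟨A, W, hWne, hWd, hAW, hmono⟩ := hn (col ∘ φ)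
    set ρ : Finset (Fin k) → H := fun v => fsDeriv φ A (v.biUnion W) - φ A
    have hρ : Pol0 univ d ρ :=
      ⟨((hφ.1.isPolyDeg_fsDeriv (subset_univ A)).comp_biUnion
        (fun e => subset_sdiff.2 ⟨subset_univ _, (hAW e).symm⟩) hWd univ).sub_const _,
        by simp [ρ, fsDeriv, hφ.2]⟩
    obtain ⟨c, hcne, hcd, hc⟩ := hk ρ hρ
    refine ⟨fun j => (c j).biUnion W, fun j => (hcne j).biUnion fun e _ => hWne e,
      fun i j hij => disjoint_biUnion_of_pairwise hWd (hcd hij), fun t => ?_⟩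
    rw [← biUnion_biUnion]
    set v := t.biUnion c
    calc ‖φ (v.biUnion W)‖ = ‖(φ (A ∪ v.biUnion W) - φ A) - ρ v‖ := by
          simp only [ρ, fsDeriv, union_comm A, sub_sub_sub_cancel_right, sub_sub_cancel]
      _ ≤ ‖φ (A ∪ v.biUnion W) - φ A‖ + ‖ρ v‖ := norm_sub_le _ _
      _ < ε / 2 + ε / 2 := add_lt_add (by rw [← dist_eq_norm]; exact hcol _ _ (hmono v)) (hc t)
      _ = ε := add_halves ε

/-- Proposition: for any d, s ∈ ℕ and ε > 0 there is r such that every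
`φ ∈ Pol⁰_d([r], 𝕋)` has a disjoint s-subcollection `B` in `[r]` such that the
t-producing function `Φ̃_B` of `φ↓_B` has all its values (on nonempty subsets of
`B` of cardinality ≤ d) ε-close to 0. -/
theorem pol0_torus_subpolynomial_small_tproducing (d s : ℕ) (ε : ℝ) (hε : 0 < ε) :
    ∃ r : ℕ, ∀ φ : Finset ℕ → UnitAddCircle,
      Pol0 (Finset.Icc 1 r) d φ →
      ∃ b : Fin s → Finset ℕ,
        (∀ j, (b j).Nonempty ∧ b j ⊆ Finset.Icc 1 r) ∧
        (∀ j j', j ≠ j' → Disjoint (b j) (b j')) ∧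
        ∃ Φtil : Finset (Fin s) → UnitAddCircle,
          (∀ γ : Finset (Fin s),
            φ (γ.biUnion b) =
              ∑ u ∈ γ.powerset.filter (fun u => u ≠ ∅ ∧ u.card ≤ d), Φtil u) ∧
          (∀ u : Finset (Fin s), u ≠ ∅ → u.card ≤ d → dist (Φtil u) 0 < ε) := by
  obtain ⟨r, hr⟩ := exists_forall_norm_biUnion_lt UnitAddCircle d s (ε := ε / 2 ^ d)
    (by positivity)
  refine ⟨r, fun φ hφ => ?_⟩
  set S : Fin r → Finset ℕ := fun i => {(i : ℕ) + 1}
  have hS : ∀ i, S i ⊆ Icc 1 r := fun i => by simp [S]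
  have hSd : Pairwise (Disjoint on S) := fun i j h => by simpa [S, Fin.val_inj] using h
  obtain ⟨c, hcne, hcd, hc⟩ := hr _ (hφ.comp_biUnion hS hSd univ)
  set b : Fin s → Finset ℕ := fun j => (c j).biUnion S
  have hb : ∀ j, b j ⊆ Icc 1 r := fun j => biUnion_subset.2 fun i _ => hS i
  have hbd : Pairwise (Disjoint on b) := fun i j hij => disjoint_biUnion_of_pairwise hSd (hcd hij)
  have hψ := hφ.comp_biUnion hb hbd univ
  refine ⟨b, fun j => ⟨(hcne j).biUnion fun i _ => singleton_nonempty _, hb j⟩,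
    fun i j hij => hbd hij, tProducing fun γ => φ (γ.biUnion b),
    fun γ => hψ.eq_sum_tProducing (subset_univ γ), fun u _ hu => ?_⟩
  rw [dist_zero_right]
  calc _ < 2 ^ #u * (ε / 2 ^ d) := norm_tProducing_lt _ fun v _ => by
          simpa only [b, ← biUnion_biUnion] using hc v
    _ ≤ 2 ^ d * (ε / 2 ^ d) := by gcongr; norm_num
    _ = ε := by field_simp
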